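/- arXiv:2102.12608 — 2 statements merged into one kernel-verified Lean document; each statement's English description precedes it below -/
import Mathlib

section
/- Let f : ℝ^d → ℝ be differentiable, μ-PL (i.e., μ(f(x) - f*) ≤ ‖∇f(x)‖² for all x, where f* is the global minimum), and β-smooth (gradient β-Lipschitz). Consider the update x_{t+1} = x_t - η g_t where ‖g_t - ∇f(x_t)‖ ≤ ε for all t, with step size η ≤ 1/β and η ≤ 4/μ. Then for all t, f(x_t) - f* ≤ max{ 4ε²/μ , (1 - μη/3)^t (f(x_0) - f*) }. -/
open scoped BigOperators

lemma smooth_descent_aux {d : ℕ} {f : EuclideanSpace ℝ (Fin d) → ℝ} {β : ℝ}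
    (hf : Differentiable ℝ f) (hβ : 0 ≤ β)
    (hsmooth : ∀ x y, ‖gradient f x - gradient f y‖ ≤ β * ‖x - y‖)
    (x y : EuclideanSpace ℝ (Fin d)) :
    f y ≤ f x + inner ℝ (gradient f x) (y - x) + β / 2 * ‖y - x‖ ^ 2 := by
  set v := y - x with hv
  have hgc : Continuous (gradient f) := by
    have hl : LipschitzWith (Real.toNNReal β) (gradient f) := by
      apply LipschitzWith.of_dist_le_mul
      intro a b
      rw [dist_eq_norm, dist_eq_norm]
      calc ‖gradient f a - gradient f b‖ ≤ β * ‖a - b‖ := hsmooth a b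
        _ = Real.toNNReal β * ‖a - b‖ := by rw [Real.coe_toNNReal β hβ]
    exact hl.continuous
  have hderiv : ∀ t : ℝ, HasDerivAt (fun s : ℝ => f (x + s • v))
      ((inner ℝ (gradient f (x + t • v)) v : ℝ)) t := by
    intro t
    have h2 : HasDerivAt (fun s : ℝ => x + s • v) v t := by
      simpa using ((hasDerivAt_id t).smul_const v).const_add x
    have h1 : HasFDerivAt f
        (InnerProductSpace.toDual ℝ _ (gradient f (x + t • v))) (x + t • v) :=
      (hf (x + t • v)).hasGradientAt.hasFDerivAt
    have h3 := h1.comp_hasDerivAt t h2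
    exact h3
  have hcont : Continuous fun t : ℝ => (inner ℝ (gradient f (x + t • v)) v : ℝ) := by
    exact (hgc.comp (by continuity)).inner continuous_const
  have hftc : ∫ t in (0:ℝ)..1, (inner ℝ (gradient f (x + t • v)) v : ℝ)
      = f y - f x := by
    rw [intervalIntegral.integral_eq_sub_of_hasDerivAt (fun t _ => hderiv t)
      (hcont.intervalIntegrable 0 1)]
    simp [hv]
  have hmono : ∫ t in (0:ℝ)..1, (inner ℝ (gradient f (x + t • v)) v : ℝ)
      ≤ ∫ t in (0:ℝ)..1, ((inner ℝ (gradient f x) v : ℝ) + β * ‖v‖ ^ 2 * t) := by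
    apply intervalIntegral.integral_mono_on (by norm_num)
      (hcont.intervalIntegrable 0 1)
      ((continuous_const.add (continuous_const.mul continuous_id')).intervalIntegrable 0 1)
    intro t ht
    rw [Set.mem_Icc] at ht
    have key : (inner ℝ (gradient f (x + t • v)) v : ℝ) - inner ℝ (gradient f x) v
        = inner ℝ (gradient f (x + t • v) - gradient f x) v := by
      rw [inner_sub_left]
    have hb : (inner ℝ (gradient f (x + t • v) - gradient f x) v : ℝ)
        ≤ β * ‖v‖ ^ 2 * t := by
      calc (inner ℝ (gradient f (x + t • v) - gradient f x) v : ℝ)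
          ≤ ‖gradient f (x + t • v) - gradient f x‖ * ‖v‖ := real_inner_le_norm _ _
        _ ≤ (β * ‖x + t • v - x‖) * ‖v‖ := by
            apply mul_le_mul_of_nonneg_right (hsmooth _ _) (norm_nonneg _)
        _ = β * ‖v‖ ^ 2 * t := by
            rw [show x + t • v - x = t • v by abel, norm_smul]
            simp [abs_of_nonneg ht.1]
            ring
    simp only [Pi.add_apply, Pi.mul_apply]
    linarith [key, hb]
  have hrhs : ∫ t in (0:ℝ)..1, ((inner ℝ (gradient f x) v : ℝ) + β * ‖v‖ ^ 2 * t)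
      = (inner ℝ (gradient f x) v : ℝ) + β / 2 * ‖v‖ ^ 2 := by
    rw [intervalIntegral.integral_add (f := fun _ : ℝ => (inner ℝ (gradient f x) v : ℝ))
      (g := fun t : ℝ => β * ‖v‖ ^ 2 * t) (intervalIntegrable_const)
      ((continuous_const.mul continuous_id').intervalIntegrable 0 1)]
    rw [intervalIntegral.integral_const_mul, integral_id]
    simp
    ring
  have := hmono.trans_eq hrhs
  rw [hftc] at this
  linarith

set_option maxHeartbeats 1000000 in
/-- Corrupted gradient descent on a `μ`-PL, `β`-smooth function: the suboptimality
gap decays linearly up to accuracy `4ε²/μ`. -/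
theorem corrupted_gradient_descent
    {d : ℕ} {f : EuclideanSpace ℝ (Fin d) → ℝ} {fstar : ℝ}
    {μ β η ε : ℝ}
    (hf : Differentiable ℝ f)
    (hmin : ∀ x, fstar ≤ f x)
    (hμ : 0 < μ)
    (hPL : ∀ x, μ * (f x - fstar) ≤ ‖gradient f x‖ ^ 2)
    (hβ : 0 < β)
    (hsmooth : ∀ x y, ‖gradient f x - gradient f y‖ ≤ β * ‖x - y‖)
    (hη : 0 < η) (hηβ : η ≤ 1 / β) (hημ : η ≤ 4 / μ)
    (hε : 0 ≤ ε)
    (x g : ℕ → EuclideanSpace ℝ (Fin d))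
    (hupd : ∀ t, x (t + 1) = x t - η • g t)
    (herr : ∀ t, ‖g t - gradient f (x t)‖ ≤ ε) :
    ∀ t, f (x t) - fstar ≤
      max (4 * ε ^ 2 / μ) ((1 - μ * η / 3) ^ t * (f (x 0) - fstar)) := by
  have hβη : β * η ≤ 1 := by
    rw [le_div_iff₀ hβ] at hηβ; linarith
  have hμη : μ * η ≤ 4 := by
    rw [le_div_iff₀ hμ] at hημ; linarith
  have step : ∀ t, f (x (t + 1)) - fstar
      ≤ (1 - μ * η / 2) * (f (x t) - fstar) + η * ε ^ 2 / 2 := by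
    intro t
    have hd := smooth_descent_aux hf hβ.le hsmooth (x t) (x (t + 1))
    set G := gradient f (x t) with hG
    have hxy : x (t + 1) - x t = -(η • g t) := by rw [hupd t]; abel
    rw [hxy] at hd
    have hinner : (inner ℝ G (-(η • g t)) : ℝ) = -(η * inner ℝ G (g t)) := by
      rw [inner_neg_right, real_inner_smul_right]
    have hnorm2 : ‖-(η • g t)‖ ^ 2 = η ^ 2 * ‖g t‖ ^ 2 := by
      rw [norm_neg, norm_smul]
      simp [abs_of_pos hη]
      ring
    rw [hinner, hnorm2, real_inner_comm (g t) G] at hd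
    have hgn : (0:ℝ) ≤ ‖g t‖ ^ 2 := sq_nonneg _
    have h1 : β / 2 * (η ^ 2 * ‖g t‖ ^ 2) ≤ η / 2 * ‖g t‖ ^ 2 := by
      nlinarith [mul_nonneg hη.le hgn]
    have hsq : ‖g t - G‖ ^ 2 = ‖g t‖ ^ 2 - 2 * inner ℝ (g t) G + ‖G‖ ^ 2 :=
      norm_sub_sq_real _ _
    have hsq' : η / 2 * ‖g t - G‖ ^ 2
        = η / 2 * ‖g t‖ ^ 2 - η * inner ℝ (g t) G + η / 2 * ‖G‖ ^ 2 := by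
      rw [hsq]; ring
    have he2 : ‖g t - G‖ ^ 2 ≤ ε ^ 2 := by
      have h := herr t
      nlinarith [norm_nonneg (g t - G)]
    have hA : η / 2 * ‖g t - G‖ ^ 2 ≤ η / 2 * ε ^ 2 :=
      mul_le_mul_of_nonneg_left he2 (by positivity)
    have hB : η / 2 * (μ * (f (x t) - fstar)) ≤ η / 2 * ‖G‖ ^ 2 :=
      mul_le_mul_of_nonneg_left (hPL (x t)) (by positivity)
    nlinarith [hd, h1, hA, hB, hsq']
  intro t
  induction t with
  | zero =>
    rw [pow_zero, one_mul]
    exact le_max_right _ _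
  | succ t ih =>
    have hΔ0 : 0 ≤ f (x t) - fstar := sub_nonneg.2 (hmin _)
    have hs := step t
    rcases le_or_gt (f (x t) - fstar) (4 * ε ^ 2 / μ) with hc | hc
    · refine le_trans ?_ (le_max_left _ _)
      rw [le_div_iff₀ hμ]
      have hcμ : (f (x t) - fstar) * μ ≤ 4 * ε ^ 2 := (le_div_iff₀ hμ).mp hc
      have hmul := mul_le_mul_of_nonneg_left hs hμ.le
      nlinarith [mul_nonneg (sub_nonneg.2 hμη) (sub_nonneg.2 hcμ),
        mul_nonneg (mul_nonneg hμ.le hη.le) (mul_nonneg hμ.le hΔ0),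
        sq_nonneg ε]
    · have hε2 : 4 * ε ^ 2 < (f (x t) - fstar) * μ := (div_lt_iff₀ hμ).mp hc
      have hstep2 : f (x (t + 1)) - fstar ≤ (1 - μ * η / 3) * (f (x t) - fstar) := by
        have hm1 : η / 8 * (4 * ε ^ 2) ≤ η / 8 * ((f (x t) - fstar) * μ) :=
          mul_le_mul_of_nonneg_left hε2.le (by positivity)
        have hm2 : (0:ℝ) ≤ η * μ * (f (x t) - fstar) :=
          mul_nonneg (mul_nonneg hη.le hμ.le) hΔ0
        linarith [hs, hm1, hm2]
      have hP : f (x t) - fstar ≤ (1 - μ * η / 3) ^ t * (f (x 0) - fstar) := by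
        rcases le_max_iff.mp ih with h | h
        · linarith
        · exact h
      rcases le_or_gt 0 (1 - μ * η / 3) with hpos | hneg
      · refine le_trans ?_ (le_max_right _ _)
        calc f (x (t + 1)) - fstar ≤ (1 - μ * η / 3) * (f (x t) - fstar) := hstep2
          _ ≤ (1 - μ * η / 3) * ((1 - μ * η / 3) ^ t * (f (x 0) - fstar)) :=
              mul_le_mul_of_nonneg_left hP hpos
          _ = (1 - μ * η / 3) ^ (t + 1) * (f (x 0) - fstar) := by
              rw [pow_succ]; ring
      · refine le_trans ?_ (le_max_left _ _)
        have hneg2 : (1 - μ * η / 3) * (f (x t) - fstar) ≤ 0 :=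
          mul_nonpos_of_nonpos_of_nonneg hneg.le hΔ0
        have : (0:ℝ) ≤ 4 * ε ^ 2 / μ := by positivity
        linarith
end

section
/- Let f : ℝ^d → ℝ be differentiable, μ-PL, and β-smooth, and let x_{t+1} = x_t - η g_t with ‖g_t - ∇f(x_t)‖ ≤ ε and η ≤ min{1/β, 4/μ}. If for some t, 4ε²/μ ≤ f(x_t) - f*, then f(x_{t+1}) - f* ≤ (1 - μη/3)(f(x_t) - f*). -/
open InnerProductSpace

lemma line_hasDerivAt_aux {E : Type*} [NormedAddCommGroup E] [InnerProductSpace ℝ E]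
    [CompleteSpace E] {f : E → ℝ} (hf : Differentiable ℝ f) (x y : E) (s : ℝ) :
    HasDerivAt (fun s : ℝ => f (x + s • (y - x)))
      ⟪gradient f (x + s • (y - x)), y - x⟫_ℝ s := by
  have hline : HasDerivAt (fun s : ℝ => x + s • (y - x)) (y - x) s := by
    simpa using ((hasDerivAt_id s).smul_const (y - x)).const_add x
  have hgrad := (hf (x + s • (y - x))).hasGradientAt.hasFDerivAt
  have := hgrad.comp_hasDerivAt s hline
  simpa [toDual_apply_apply, Function.comp_def] using this

/-- Descent lemma for `β`-smooth functions. -/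
lemma descent_lemma_aux {E : Type*} [NormedAddCommGroup E] [InnerProductSpace ℝ E]
    [CompleteSpace E] {f : E → ℝ} (hf : Differentiable ℝ f) {β : ℝ} (hβ : 0 ≤ β)
    (hsmooth : ∀ x y, ‖gradient f x - gradient f y‖ ≤ β * ‖x - y‖) (x y : E) :
    f y ≤ f x + ⟪gradient f x, y - x⟫_ℝ + β / 2 * ‖y - x‖ ^ 2 := by
  set ψ : ℝ → ℝ := fun s =>
    f (x + s • (y - x)) - s * ⟪gradient f x, y - x⟫_ℝ - β / 2 * s ^ 2 * ‖y - x‖ ^ 2 with hψ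
  have hψd : ∀ s : ℝ, HasDerivAt ψ
      (⟪gradient f (x + s • (y - x)), y - x⟫_ℝ - ⟪gradient f x, y - x⟫_ℝ
        - β * s * ‖y - x‖ ^ 2) s := by
    intro s
    have h1 := line_hasDerivAt_aux hf x y s
    have h2 : HasDerivAt (fun s : ℝ => s * ⟪gradient f x, y - x⟫_ℝ)
        (⟪gradient f x, y - x⟫_ℝ) s := by
      simpa using (hasDerivAt_id s).mul_const _
    have h3 : HasDerivAt (fun s : ℝ => β / 2 * s ^ 2 * ‖y - x‖ ^ 2)
        (β * s * ‖y - x‖ ^ 2) s := by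
      have := ((hasDerivAt_pow 2 s).const_mul (β / 2)).mul_const (‖y - x‖ ^ 2)
      exact this.congr_deriv (by ring)
    simpa [hψ, Pi.sub_def] using (h1.sub h2).sub h3
  have hmono : AntitoneOn ψ (Set.Icc (0 : ℝ) 1) := by
    apply antitoneOn_of_deriv_nonpos (convex_Icc 0 1)
    · exact (Continuous.continuousOn (by
        exact Continuous.sub (Continuous.sub
          (hf.continuous.comp (by continuity)) (by continuity)) (by continuity)))
    · intro s _
      exact (hψd s).differentiableAt.differentiableWithinAt
    · intro s hs
      rw [interior_Icc] at hs
      rw [(hψd s).deriv]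
      have hdiff : ⟪gradient f (x + s • (y - x)) - gradient f x, y - x⟫_ℝ
          ≤ β * s * ‖y - x‖ ^ 2 := by
        calc ⟪gradient f (x + s • (y - x)) - gradient f x, y - x⟫_ℝ
            ≤ ‖gradient f (x + s • (y - x)) - gradient f x‖ * ‖y - x‖ :=
              real_inner_le_norm _ _
          _ ≤ (β * ‖(x + s • (y - x)) - x‖) * ‖y - x‖ := by
              gcongr; exact hsmooth _ _
          _ = β * (|s| * ‖y - x‖) * ‖y - x‖ := by
              rw [add_sub_cancel_left, norm_smul]; norm_num
          _ = β * s * ‖y - x‖ ^ 2 := by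
              rw [abs_of_pos hs.1]; ring
      have := inner_sub_left (𝕜 := ℝ) (gradient f (x + s • (y - x))) (gradient f x) (y - x)
      linarith [hdiff, this.symm]
  have h01 := hmono (Set.left_mem_Icc.2 zero_le_one) (Set.right_mem_Icc.2 zero_le_one)
    zero_le_one
  simp only [hψ, zero_smul, add_zero, one_smul, zero_mul, sub_zero, zero_pow,
    mul_zero, one_mul, one_pow, add_sub_cancel] at h01
  linarith

set_option maxHeartbeats 1000000 in
/-- One step of inexact gradient descent on a `μ`-PL, `β`-smooth function:
if the gap exceeds `4ε²/μ`, it contracts by a factor `1 - μη/3`. -/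
theorem corrupted_gd_contraction_step
    {d : ℕ} {f : EuclideanSpace ℝ (Fin d) → ℝ} {fstar : ℝ}
    {μ β η ε : ℝ}
    (hf : Differentiable ℝ f)
    (hmin : ∀ x, fstar ≤ f x)
    (hμ : 0 < μ)
    (hPL : ∀ x, μ * (f x - fstar) ≤ ‖gradient f x‖ ^ 2)
    (hβ : 0 < β)
    (hsmooth : ∀ x y, ‖gradient f x - gradient f y‖ ≤ β * ‖x - y‖)
    (hη : 0 < η) (hηmin : η ≤ min (1 / β) (4 / μ))
    (hε : 0 ≤ ε)
    (x g : ℕ → EuclideanSpace ℝ (Fin d))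
    (hupd : ∀ t, x (t + 1) = x t - η • g t)
    (herr : ∀ t, ‖g t - gradient f (x t)‖ ≤ ε)
    (t : ℕ)
    (hgap : 4 * ε ^ 2 / μ ≤ f (x t) - fstar) :
    f (x (t + 1)) - fstar ≤ (1 - μ * η / 3) * (f (x t) - fstar) := by
  set X := x t
  set Y := x (t + 1)
  set G := gradient f X with hG
  set E := g t - G with hE
  have hgE : G + E = g t := by simp [hE]
  have hYX : Y - X = -(η • (G + E)) := by
    rw [hgE]; show x (t + 1) - x t = _; rw [hupd t]; abel
  have hdesc := descent_lemma_aux hf hβ.le hsmooth X Y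
  rw [hYX] at hdesc
  have hGe : ⟪G, -(η • (G + E))⟫_ℝ = -(η * (‖G‖ ^ 2 + ⟪G, E⟫_ℝ)) := by
    rw [inner_neg_right, real_inner_smul_right, inner_add_right,
      real_inner_self_eq_norm_sq]
  have hnorm : ‖-(η • (G + E))‖ ^ 2 = η ^ 2 * (‖G‖ ^ 2 + 2 * ⟪G, E⟫_ℝ + ‖E‖ ^ 2) := by
    rw [norm_neg, norm_smul, mul_pow, ← @norm_add_sq_real]
    simp [abs_of_pos hη]
  rw [hGe, hnorm] at hdesc
  -- bounds
  have hηβ : η * β ≤ 1 := by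
    have := le_trans hηmin (min_le_left _ _)
    calc η * β ≤ (1 / β) * β := by gcongr
      _ = 1 := by field_simp
  have hEε : ‖E‖ ^ 2 ≤ ε ^ 2 := by
    have := herr t
    have h0 : ‖E‖ ≤ ε := by simpa [hE] using this
    nlinarith [norm_nonneg E]
  have hPLt := hPL X
  have hgap' : 4 * ε ^ 2 ≤ μ * (f X - fstar) := by
    rw [div_le_iff₀ hμ] at hgap
    linarith [hgap]
  have hGE2 : (0:ℝ) ≤ ‖G‖ ^ 2 + 2 * ⟪G, E⟫_ℝ + ‖E‖ ^ 2 := by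
    have : ‖G + E‖ ^ 2 = ‖G‖ ^ 2 + 2 * ⟪G, E⟫_ℝ + ‖E‖ ^ 2 := by
      rw [← @norm_add_sq_real]
    rw [← this]; positivity
  -- β/2 * η² * (...) ≤ η/2 * (...)
  have hquad : β / 2 * (η ^ 2 * (‖G‖ ^ 2 + 2 * ⟪G, E⟫_ℝ + ‖E‖ ^ 2))
      ≤ η / 2 * (‖G‖ ^ 2 + 2 * ⟪G, E⟫_ℝ + ‖E‖ ^ 2) := by
    nlinarith [hGE2, hη, hηβ]
  have hkey : f Y ≤ f X - η / 2 * ‖G‖ ^ 2 + η / 2 * ε ^ 2 := by nlinarith [hdesc, hquad, hEε, hη]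
  have hΔ : 0 ≤ f X - fstar := by linarith [hmin X]
  have h1 : 0 ≤ η * (‖G‖ ^ 2 - μ * (f X - fstar)) := mul_nonneg hη.le (by linarith)
  have h2 : 0 ≤ η * (μ * (f X - fstar) - 4 * ε ^ 2) := mul_nonneg hη.le (by linarith)
  have h3 : 0 ≤ μ * η * (f X - fstar) := mul_nonneg (mul_nonneg hμ.le hη.le) hΔ
  nlinarith [hkey, h1, h2, h3]
end
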